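/- In ℤ³ with basis e₀, e₁, e₂, for every 2-dimensional cone σ_C = ⟨u₁, u₂⟩ in the following list with adjacent generators (u₊, u₋), the unique integers a₁, a₂ with u₊ + u₋ + a₁u₁ + a₂u₂ = 0 satisfy a₁, a₂ ≥ -1 with at most one equal to -1: (⟨v₁,v₃⟩; v₀, w₀), (⟨v₂,v₄⟩; v₀, w₀), (⟨v₀,w₁⟩; v₁, v₄), (⟨v₀,w₂⟩; v₂, v₃), (⟨w₁,w₀⟩; v₁, v₄), (⟨w₂,w₀⟩; v₂, v₃), where v₀=e₀, v₁=e₁, v₂=-e₁, v₃=e₂, v₄=-e₂, w₀=e₁-e₀, w₁=e₁-e₂, w₂=e₂-e₁. -/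

import Mathlib

section

variable {R : Type*}

theorem linearIndependent_pair_of_minor_ne_zero [CommRing R] [IsDomain R] {ι : Type*}
    {u v : ι → R} (i j : ι) (hminor : u i * v j - u j * v i ≠ 0) :
    LinearIndependent R ![u, v] := by
  refine LinearIndependent.pair_iff.mpr fun s t hst => ?_
  have hi : s * u i + t * v i = 0 := by simpa using congrFun hst i
  have hj : s * u j + t * v j = 0 := by simpa using congrFun hst j
  -- Cramer's rule for the 2 × 2 system formed by the coordinates `i` and `j`.
  have hs : s * (u i * v j - u j * v i) = 0 := by linear_combination v j * hi - v i * hj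
  have ht : t * (u i * v j - u j * v i) = 0 := by linear_combination u i * hj - u j * hi
  exact ⟨(mul_eq_zero.mp hs).resolve_right hminor, (mul_eq_zero.mp ht).resolve_right hminor⟩

variable {M : Type*} [Ring R] [AddCommGroup M] [Module R M]

theorem LinearIndependent.eq_of_add_smul_add_smul_eq_zero {u₁ u₂ x : M}
    (hli : LinearIndependent R ![u₁, u₂]) {a b : R × R}
    (ha : x + a.1 • u₁ + a.2 • u₂ = 0) (hb : x + b.1 • u₁ + b.2 • u₂ = 0) : a = b := by
  have hdiff : (a.1 - b.1) • u₁ + (a.2 - b.2) • u₂ = 0 := by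
    rw [sub_smul, sub_smul, ← sub_eq_zero.mpr (ha.trans hb.symm)]
    abel
  obtain ⟨h₁, h₂⟩ := LinearIndependent.pair_iff.mp hli _ _ hdiff
  exact Prod.ext (sub_eq_zero.mp h₁) (sub_eq_zero.mp h₂)

theorem existsUnique_and_forall_of_linearIndependent {u₁ u₂ x : M}
    (hli : LinearIndependent R ![u₁, u₂]) (P : R → R → Prop) (b : R × R)
    (hb : x + b.1 • u₁ + b.2 • u₂ = 0) (hP : P b.1 b.2) :
    (∃! a : R × R, x + a.1 • u₁ + a.2 • u₂ = 0) ∧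
      ∀ a₁ a₂ : R, x + a₁ • u₁ + a₂ • u₂ = 0 → P a₁ a₂ := by
  refine ⟨⟨b, hb, fun a ha => hli.eq_of_add_smul_add_smul_eq_zero ha hb⟩, ?_⟩
  intro a₁ a₂ ha
  obtain rfl : (a₁, a₂) = b := hli.eq_of_add_smul_add_smul_eq_zero ha hb
  exact hP

end

theorem existsUnique_and_forall_of_minor_ne_zero {R ι : Type*} [CommRing R] [IsDomain R]
    {u₁ u₂ x : ι → R} {P : R → R → Prop} (i j : ι) (b : R × R)
    (hminor : u₁ i * u₂ j - u₁ j * u₂ i ≠ 0) (hb : x + b.1 • u₁ + b.2 • u₂ = 0)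
    (hP : P b.1 b.2) :
    (∃! a : R × R, x + a.1 • u₁ + a.2 • u₂ = 0) ∧
      ∀ a₁ a₂ : R, x + a₁ • u₁ + a₂ • u₂ = 0 → P a₁ a₂ := by
  have hli := linearIndependent_pair_of_minor_ne_zero i j hminor
  exact existsUnique_and_forall_of_linearIndependent hli P b hb hP

theorem bondal_criterium_checks_X3 (e : Fin 3 → Fin 3 → ℤ)
    (he : ∀ i, e i = Pi.single i 1)
    (v₀ v₁ v₂ v₃ v₄ w₀ w₁ w₂ : Fin 3 → ℤ)
    (hv₀ : v₀ = e 0) (hv₁ : v₁ = e 1) (hv₂ : v₂ = -(e 1))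
    (hv₃ : v₃ = e 2) (hv₄ : v₄ = -(e 2))
    (hw₀ : w₀ = e 1 - e 0) (hw₁ : w₁ = e 1 - e 2) (hw₂ : w₂ = e 2 - e 1) :
    ∀ u₁ u₂ up um : Fin 3 → ℤ,
      (u₁, u₂, up, um) ∈ [(v₁, v₃, v₀, w₀), (v₂, v₄, v₀, w₀), (v₀, w₁, v₁, v₄),
        (v₀, w₂, v₂, v₃), (w₁, w₀, v₁, v₄), (w₂, w₀, v₂, v₃)] →
      (∃! a : ℤ × ℤ, up + um + a.1 • u₁ + a.2 • u₂ = 0) ∧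
      (∀ a₁ a₂ : ℤ, up + um + a₁ • u₁ + a₂ • u₂ = 0 →
        -1 ≤ a₁ ∧ -1 ≤ a₂ ∧ ¬(a₁ = -1 ∧ a₂ = -1)) := by
  subst hv₀ hv₁ hv₂ hv₃ hv₄ hw₀ hw₁ hw₂
  intro u₁ u₂ up um hmem
  fin_cases hmem <;> obtain rfl : e = fun i => Pi.single i 1 := funext he
  · refine existsUnique_and_forall_of_minor_ne_zero 1 2 (-1, 0) ?_ ?_ ?_ <;> decide
  · refine existsUnique_and_forall_of_minor_ne_zero 1 2 (1, 0) ?_ ?_ ?_ <;> decide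
  · refine existsUnique_and_forall_of_minor_ne_zero 0 1 (0, -1) ?_ ?_ ?_ <;> decide
  · refine existsUnique_and_forall_of_minor_ne_zero 0 1 (0, -1) ?_ ?_ ?_ <;> decide
  · refine existsUnique_and_forall_of_minor_ne_zero 0 1 (-1, 0) ?_ ?_ ?_ <;> decide
  · refine existsUnique_and_forall_of_minor_ne_zero 0 1 (-1, 0) ?_ ?_ ?_ <;> decide
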